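/- arXiv:2304.14096 — 3 statements merged into one kernel-verified Lean document; each statement's English description precedes it below -/
import Mathlib

section
/- For every integer d ≥ 2 and every index 1 ≤ j ≤ d², the Recursive Block Basis element B_j^{(d)} is Hermitian and satisfies (B_j^{(d)})² = I_d; in particular each B_j^{(d)} is a Hermitian unitary matrix. -/
open Matrix

/-- The Pauli matrix `σ1`. -/
noncomputable def σ1 : Matrix (Fin 2) (Fin 2) ℂ := !![0, 1; 1, 0]

/-- The Pauli matrix `σ2`. -/
noncomputable def σ2 : Matrix (Fin 2) (Fin 2) ℂ := !![0, -Complex.I; Complex.I, 0]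

/-- The Pauli matrix `σ3`. -/
noncomputable def σ3 : Matrix (Fin 2) (Fin 2) ℂ := !![1, 0; 0, -1]

/-- Append a scalar diagonal entry at the bottom-right corner of a square matrix. -/
noncomputable def diagAppend {d : ℕ} (M : Matrix (Fin d) (Fin d) ℂ) (c : ℂ) :
    Matrix (Fin (d + 1)) (Fin (d + 1)) ℂ :=
  Matrix.reindex finSumFinEquiv finSumFinEquiv
    (Matrix.fromBlocks M 0 0 (Matrix.of fun _ _ => c))

/-- The matrix `diag(D, σ)` of size `d`, where `D` is the `(d-2) × (d-2)` diagonal matrix with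
`l`-th diagonal entry `(-1)^(l-1)` (for 1-based `l`) and `σ` is a `2 × 2` bottom-right block. -/
noncomputable def Dsig (d : ℕ) (σ : Matrix (Fin 2) (Fin 2) ℂ) : Matrix (Fin d) (Fin d) ℂ :=
  Matrix.of fun i j =>
    if (i : ℕ) < d - 2 ∨ (j : ℕ) < d - 2 then
      (if i = j ∧ (i : ℕ) < d - 2 then ((-1 : ℂ)) ^ (i : ℕ) else 0)
    else σ (if (i : ℕ) = d - 2 then 0 else 1) (if (j : ℕ) = d - 2 then 0 else 1)

/-- The `d × d` permutation matrix of the transposition exchanging the (1-based) positions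
`k` and `d - 1` (the identity matrix when `k = d - 1`). -/
noncomputable def Pswap (d k : ℕ) : Matrix (Fin d) (Fin d) ℂ :=
  Matrix.of fun i j =>
    if (i : ℕ) = k - 1 then (if (j : ℕ) = d - 2 then 1 else 0)
    else if (i : ℕ) = d - 2 then (if (j : ℕ) = k - 1 then 1 else 0)
    else (if i = j then 1 else 0)

/-- The RBB element with index `d^2 - 1`: `diag(I_{⌊d/2⌋+1}, -I_{⌊d/2⌋})` for odd `d`, and
`diag(I_{d/2-1}, -I_{d/2-1}, -σ3)` for even `d`. -/
noncomputable def lastDiag (d : ℕ) : Matrix (Fin d) (Fin d) ℂ :=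
  Matrix.diagonal fun i =>
    if d % 2 = 1 then (if (i : ℕ) < d / 2 + 1 then 1 else -1)
    else (if (i : ℕ) < d / 2 - 1 ∨ (i : ℕ) = d - 1 then 1 else -1)

/-- The Recursive Block Basis: `RBB d j` is the `d × d` matrix `B_j^{(d)}`, for the 1-based
index `1 ≤ j ≤ d^2`.  For `d = 2` it is the Pauli basis `σ1, σ2, σ3, I`; for `d > 2` it is
defined recursively from `RBB (d-1)`:
* `B_j^{(d)} = diag(B_j^{(d-1)}, (-1)^(d-1))` for `1 ≤ j ≤ (d-1)^2 - 1`;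
* `B_j^{(d)} = P_{(k,d-1)} ⬝ diag(D, σ1) ⬝ P_{(k,d-1)}` for `j = (d-1)^2 + (k-1)`, `1 ≤ k ≤ d-1`;
* `B_j^{(d)} = P_{(k,d-1)} ⬝ diag(D, σ2) ⬝ P_{(k,d-1)}` for `j = (d-1)^2 + (d-1) + (k-1)`,
  `1 ≤ k ≤ d-1`;
* `B_{d^2-1}^{(d)} = lastDiag d` and `B_{d^2}^{(d)} = I_d`. -/
noncomputable def RBB : (d : ℕ) → ℕ → Matrix (Fin d) (Fin d) ℂ
  | 0, _ => 1
  | 1, _ => 1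
  | 2, j => if j = 1 then σ1 else if j = 2 then σ2 else if j = 3 then σ3 else 1
  | (m + 3), j =>
      if j ≤ (m + 2) ^ 2 - 1 then diagAppend (RBB (m + 2) j) ((-1 : ℂ) ^ (m + 2))
      else if j ≤ (m + 2) ^ 2 + (m + 1) then
        Pswap (m + 3) (j - (m + 2) ^ 2 + 1) * Dsig (m + 3) σ1 *
          Pswap (m + 3) (j - (m + 2) ^ 2 + 1)
      else if j ≤ (m + 2) ^ 2 + 2 * (m + 2) - 1 then
        Pswap (m + 3) (j - (m + 2) ^ 2 - (m + 2) + 1) * Dsig (m + 3) σ2 *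
          Pswap (m + 3) (j - (m + 2) ^ 2 - (m + 2) + 1)
      else if j = (m + 3) ^ 2 - 1 then lastDiag (m + 3)
      else 1

/-!
Each `B_j^{(d)}` is assembled from Hermitian involutions (Pauli matrices, diagonal matrices with
entries `±1`, the identity) by block-diagonal sums, reindexing, and conjugation by the permutation
matrix of a transposition, which is itself a Hermitian involution. All of these operations
preserve being a Hermitian involution, and a Hermitian involution `A` is unitary because
`A Aᴴ = A² = 1`.
-/

namespace Matrix

variable {n m α : Type*} [Fintype n] [DecidableEq n] [Fintype m] [DecidableEq m]

section Semiring

variable [Semiring α] [StarRing α]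

def IsHermitianInvolution (A : Matrix n n α) : Prop :=
  A.IsHermitian ∧ A * A = 1

namespace IsHermitianInvolution

theorem one : IsHermitianInvolution (1 : Matrix n n α) :=
  ⟨isHermitian_one, one_mul 1⟩

theorem conj {P A : Matrix n n α} (hP : IsHermitianInvolution P)
    (hA : IsHermitianInvolution A) : IsHermitianInvolution (P * A * P) := by
  refine ⟨?_, ?_⟩
  · simpa only [hP.1.eq] using isHermitian_conjTranspose_mul_mul P hA.1
  · calc P * A * P * (P * A * P) = P * A * (P * P) * A * P := by simp only [Matrix.mul_assoc]
      _ = 1 := by rw [hP.2, Matrix.mul_one, Matrix.mul_assoc P A A, hA.2, Matrix.mul_one, hP.2]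

theorem fromBlocks {A : Matrix n n α} {D : Matrix m m α} (hA : IsHermitianInvolution A)
    (hD : IsHermitianInvolution D) : IsHermitianInvolution (fromBlocks A 0 0 D) := by
  refine ⟨hA.1.fromBlocks conjTranspose_zero hD.1, ?_⟩
  rw [fromBlocks_multiply, hA.2, hD.2]
  simp

theorem reindex {A : Matrix m m α} (hA : IsHermitianInvolution A) (e : m ≃ n) :
    IsHermitianInvolution (reindex e e A) := by
  refine ⟨hA.1.reindex e, ?_⟩
  rw [reindex_apply, submatrix_mul_equiv, hA.2, submatrix_one_equiv]

theorem permMatrix {σ : Equiv.Perm n} (hσ : σ * σ = 1) :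
    IsHermitianInvolution (σ.permMatrix α) := by
  refine ⟨?_, ?_⟩
  · rw [IsHermitian, conjTranspose_permMatrix, inv_eq_of_mul_eq_one_right hσ]
  · rw [← permMatrix_mul, hσ, permMatrix_one]

end IsHermitianInvolution

end Semiring

theorem IsHermitianInvolution.diagonal_of_sign [Ring α] [StarRing α] {v : n → α}
    (hv : ∀ i, v i = 1 ∨ v i = -1) : IsHermitianInvolution (diagonal v) := by
  refine ⟨isHermitian_diagonal_of_self_adjoint v ?_, ?_⟩
  · funext i
    rcases hv i with h | h <;> simp [h]
  · rw [diagonal_mul_diagonal, ← diagonal_one]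
    congr 1
    funext i
    rcases hv i with h | h <;> simp [h]

theorem IsHermitianInvolution.mem_unitaryGroup [CommRing α] [StarRing α] {A : Matrix n n α}
    (hA : IsHermitianInvolution A) : A ∈ unitaryGroup n α := by
  rw [mem_unitaryGroup_iff, star_eq_conjTranspose, hA.1.eq, hA.2]

end Matrix

theorem Dsig_eq_reindex (n : ℕ) (σ : Matrix (Fin 2) (Fin 2) ℂ) :
    Dsig (n + 2) σ = reindex finSumFinEquiv finSumFinEquiv
      (fromBlocks (diagonal fun i : Fin n => (-1 : ℂ) ^ (i : ℕ)) 0 0 σ) := by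
  ext i j
  induction i using Fin.addCases <;> induction j using Fin.addCases
  case right.right a b => fin_cases a <;> fin_cases b <;> simp [Dsig]
  all_goals
    simp only [Dsig, reindex_apply, submatrix_apply, of_apply, finSumFinEquiv_symm_apply_castAdd,
      finSumFinEquiv_symm_apply_natAdd, fromBlocks_apply₁₁, fromBlocks_apply₁₂,
      fromBlocks_apply₂₁, diagonal_apply, Matrix.zero_apply, Fin.ext_iff, Fin.val_castAdd,
      Fin.val_natAdd, Nat.add_sub_cancel]
    split_ifs <;> first | rfl | omega

theorem Pswap_eq_permMatrix {d k : ℕ} (hd : 2 ≤ d) (hk : k - 1 < d) :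
    Pswap d k = (Equiv.swap (⟨k - 1, hk⟩ : Fin d) ⟨d - 2, by omega⟩).permMatrix ℂ := by
  ext i j
  simp only [Pswap, of_apply, PEquiv.toMatrix_apply, Equiv.toPEquiv_apply, Option.mem_def,
    Option.some.injEq, Equiv.swap_apply_def, Fin.ext_iff]
  split_ifs <;> simp_all

theorem isHermitianInvolution_σ1 : IsHermitianInvolution σ1 := by
  constructor <;> ext i j <;> fin_cases i <;> fin_cases j <;> simp [σ1]

theorem isHermitianInvolution_σ2 : IsHermitianInvolution σ2 := by
  constructor <;> ext i j <;> fin_cases i <;> fin_cases j <;> simp [σ2]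

theorem isHermitianInvolution_σ3 : IsHermitianInvolution σ3 := by
  constructor <;> ext i j <;> fin_cases i <;> fin_cases j <;> simp [σ3]

theorem isHermitianInvolution_diagAppend {d : ℕ} {M : Matrix (Fin d) (Fin d) ℂ} {c : ℂ}
    (hM : IsHermitianInvolution M) (hc : c = 1 ∨ c = -1) :
    IsHermitianInvolution (diagAppend M c) := by
  have hscalar : (of fun _ _ : Fin 1 => c) = diagonal fun _ => c := by
    ext i j
    rw [Subsingleton.elim i j, of_apply, diagonal_apply_eq]
  rw [diagAppend, hscalar]
  exact (hM.fromBlocks (.diagonal_of_sign fun _ => hc)).reindex _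

theorem isHermitianInvolution_Dsig (n : ℕ) {σ : Matrix (Fin 2) (Fin 2) ℂ}
    (hσ : IsHermitianInvolution σ) : IsHermitianInvolution (Dsig (n + 2) σ) := by
  rw [Dsig_eq_reindex]
  have hD := IsHermitianInvolution.diagonal_of_sign fun i : Fin n => neg_one_pow_eq_or ℂ i
  exact (hD.fromBlocks hσ).reindex _

theorem isHermitianInvolution_Pswap {d k : ℕ} (hd : 2 ≤ d) (hk : k - 1 < d) :
    IsHermitianInvolution (Pswap d k) := by
  rw [Pswap_eq_permMatrix hd hk]
  exact .permMatrix (Equiv.swap_mul_self _ _)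

theorem isHermitianInvolution_lastDiag (d : ℕ) : IsHermitianInvolution (lastDiag d) :=
  .diagonal_of_sign fun _ => by split_ifs <;> simp

theorem isHermitianInvolution_RBB (d j : ℕ) : IsHermitianInvolution (RBB d j) := by
  fun_induction RBB d j with
  | case1 | case2 | case6 => exact .one
  | case3 => exact isHermitianInvolution_σ1
  | case4 => exact isHermitianInvolution_σ2
  | case5 => exact isHermitianInvolution_σ3
  | case7 m j _ ih => exact isHermitianInvolution_diagAppend ih (neg_one_pow_eq_or ℂ _)
  | case8 m j h₁ h₂ =>
    exact (isHermitianInvolution_Pswap (by omega) (by omega)).conj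
      (isHermitianInvolution_Dsig (m + 1) isHermitianInvolution_σ1)
  | case9 m j h₁ h₂ h₃ =>
    exact (isHermitianInvolution_Pswap (by omega) (by omega)).conj
      (isHermitianInvolution_Dsig (m + 1) isHermitianInvolution_σ2)
  | case10 m => exact isHermitianInvolution_lastDiag _
  | case11 => exact .one

theorem rbb_hermitian_unitary_general (d : ℕ) (j : ℕ) :
    (RBB d j).IsHermitian ∧ RBB d j * RBB d j = 1 ∧
      RBB d j ∈ Matrix.unitaryGroup (Fin d) ℂ :=
  have h := isHermitianInvolution_RBB d j
  ⟨h.1, h.2, h.mem_unitaryGroup⟩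

/-- For every `d ≥ 2` and every `1 ≤ j ≤ d^2`, the Recursive Block Basis
element `B_j^{(d)}` is Hermitian and squares to the identity; in particular it is a Hermitian
unitary matrix. -/
theorem rbb_hermitian_unitary (d : ℕ) (hd : 2 ≤ d) (j : ℕ) (hj1 : 1 ≤ j) (hj2 : j ≤ d ^ 2) :
    (RBB d j).IsHermitian ∧ RBB d j * RBB d j = 1 ∧
      RBB d j ∈ Matrix.unitaryGroup (Fin d) ℂ :=
  rbb_hermitian_unitary_general d j
end

section
/- Let n ≥ 2, m = 2^{n−2}, and let R denote either R_Y or R_Z. For θ = (θ_1,…,θ_m) ∈ ℝ^m write F(θ) = blockdiag(R(θ_1),…,R(θ_m)), a 2^{n−1} × 2^{n−1} matrix. Let C be the 2^n × 2^n block matrix with diagonal blocks I_{2^{n−1}} and I_{2^{n−2}} ⊗ σ1 and zero off-diagonal blocks (the CNOT gate with control on the first qubit and target on the last qubit). Then for all θ, φ ∈ ℝ^m, C · (I_2 ⊗ F(φ)) · C · (I_2 ⊗ F(θ)) = blockdiag(R(ψ_1),…,R(ψ_{2m})), where ψ_j = θ_j + φ_j and ψ_{m+j} = θ_j − φ_j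 for 1 ≤ j ≤ m. -/
open Matrix

/-- The rotation gate `R_Z(θ) = diag(e^{iθ}, e^{-iθ})`. -/
noncomputable def RZ (θ : ℝ) : Matrix (Fin 2) (Fin 2) ℂ :=
  !![Complex.exp (Complex.I * θ), 0; 0, Complex.exp (-(Complex.I * θ))]

/-- The rotation gate `R_Y(θ) = !![cos θ, sin θ; -sin θ, cos θ]`. -/
noncomputable def RY (θ : ℝ) : Matrix (Fin 2) (Fin 2) ℂ :=
  !![(Real.cos θ : ℂ), (Real.sin θ : ℂ); -(Real.sin θ : ℂ), (Real.cos θ : ℂ)]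

/-- The generic `2 × 2` special unitary matrix
`U(α,β,γ) = !![e^{i(α+β)} cos γ, e^{i(α-β)} sin γ; -e^{-i(α-β)} sin γ, e^{-i(α+β)} cos γ]`. -/
noncomputable def Umat (α β γ : ℝ) : Matrix (Fin 2) (Fin 2) ℂ :=
  !![Complex.exp (Complex.I * (α + β)) * Real.cos γ,
      Complex.exp (Complex.I * (α - β)) * Real.sin γ;
    -(Complex.exp (-(Complex.I * (α - β))) * Real.sin γ),
      Complex.exp (-(Complex.I * (α + β))) * Real.cos γ]

/-- `blockDiag2 m M` is the `2m × 2m` block-diagonal matrix with the 2×2 diagonal blocks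
`M 0, M 1, …, M (m-1)`. -/
noncomputable def blockDiag2 (m : ℕ) (M : ℕ → Matrix (Fin 2) (Fin 2) ℂ) :
    Matrix (Fin (m * 2)) (Fin (m * 2)) ℂ :=
  Matrix.of fun i j =>
    if (i : ℕ) / 2 = (j : ℕ) / 2 then
      M ((i : ℕ) / 2) ⟨(i : ℕ) % 2, by omega⟩ ⟨(j : ℕ) % 2, by omega⟩
    else 0

/-- Kronecker product `A ⊗ B` with a `2 × 2` first factor, realized on `Fin (k * 2)`. -/
noncomputable def kronFirst {k : ℕ} (A : Matrix (Fin 2) (Fin 2) ℂ)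
    (B : Matrix (Fin k) (Fin k) ℂ) : Matrix (Fin (k * 2)) (Fin (k * 2)) ℂ :=
  Matrix.of fun i j =>
    A ⟨(i : ℕ) / k, Nat.div_lt_of_lt_mul i.2⟩ ⟨(j : ℕ) / k, Nat.div_lt_of_lt_mul j.2⟩ *
      B ⟨(i : ℕ) % k, Nat.mod_lt _ (by have := i.2; omega)⟩
        ⟨(j : ℕ) % k, Nat.mod_lt _ (by have := j.2; omega)⟩

/-- The `4m × 4m` CNOT gate with control on the first qubit and target on the last qubit:
the block matrix with diagonal blocks `I_{2m}` and `I_m ⊗ σ1` and zero off-diagonal blocks. -/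
noncomputable def CNOTfl (m : ℕ) : Matrix (Fin (m * 2 * 2)) (Fin (m * 2 * 2)) ℂ :=
  Matrix.of fun i j =>
    if (i : ℕ) < m * 2 then (if (i : ℕ) = (j : ℕ) then 1 else 0)
    else (if (j : ℕ) = (((i : ℕ) - m * 2) ^^^ 1) + m * 2 then 1 else 0)
/-!
The CNOT gate is the permutation matrix of an involution that fixes the first `m` blocks of two
consecutive indices and swaps the two indices inside each of the last `m` blocks. Conjugating a
block-diagonal matrix by it therefore conjugates its last `m` blocks by `σ1`, and
`σ1 R(a) σ1 = R(-a)` for `R ∈ {R_Y, R_Z}`. Since `I_2 ⊗ F(φ)` is block diagonal with blocks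
`R(φ_{j mod m})`, the product is block diagonal with blocks `R(±φ_j) R(θ_j) = R(θ_j ± φ_j)`.
-/

theorem Nat.xor_one_eq (x : ℕ) : x ^^^ 1 = 2 * (x / 2) + (1 - x % 2) := by
  rcases Nat.even_or_odd x with h | h
  · have := Nat.even_iff.mp h
    rw [Nat.xor_one_of_even h]
    omega
  · have := Nat.odd_iff.mp h
    rw [Nat.xor_one_of_odd h]
    omega

theorem PEquiv.toMatrix_toPEquiv_conj_of_involutive {n α : Type*} [Fintype n] [DecidableEq n]
    [NonAssocSemiring α] (σ : Equiv.Perm n) (hσ : Function.Involutive σ) (A : Matrix n n α) :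
    σ.toPEquiv.toMatrix * A * σ.toPEquiv.toMatrix = A.submatrix σ σ := by
  have hsymm : σ.symm = σ := by
    ext i
    rw [Equiv.symm_apply_eq, hσ]
  rw [PEquiv.toMatrix_toPEquiv_mul, PEquiv.mul_toMatrix_toPEquiv, submatrix_submatrix, hsymm]
  rfl

def pauliX : Matrix (Fin 2) (Fin 2) ℂ := !![0, 1; 1, 0]

theorem pauliX_eq_toMatrix_revPerm :
    pauliX = (Fin.revPerm : Equiv.Perm (Fin 2)).toPEquiv.toMatrix := by
  ext i j
  fin_cases i <;> fin_cases j <;> rfl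

theorem pauliX_mul_mul_pauliX (A : Matrix (Fin 2) (Fin 2) ℂ) :
    pauliX * A * pauliX = A.submatrix Fin.rev Fin.rev := by
  rw [pauliX_eq_toMatrix_revPerm,
    PEquiv.toMatrix_toPEquiv_conj_of_involutive _ Fin.rev_involutive]
  rfl

theorem RY_mul_RY (a b : ℝ) : RY a * RY b = RY (a + b) := by
  ext i j
  fin_cases i <;> fin_cases j <;>
    simp [RY, Matrix.mul_apply, Real.cos_add, Real.sin_add] <;> ring

theorem RZ_mul_RZ (a b : ℝ) : RZ a * RZ b = RZ (a + b) := by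
  ext i j
  fin_cases i <;> fin_cases j <;> simp [RZ, Matrix.mul_apply, ← Complex.exp_add] <;> ring_nf

theorem pauliX_mul_RY_mul_pauliX (a : ℝ) : pauliX * RY a * pauliX = RY (-a) := by
  rw [pauliX_mul_mul_pauliX]
  ext i j
  fin_cases i <;> fin_cases j <;> simp [RY]

theorem pauliX_mul_RZ_mul_pauliX (a : ℝ) : pauliX * RZ a * pauliX = RZ (-a) := by
  rw [pauliX_mul_mul_pauliX]
  ext i j
  fin_cases i <;> fin_cases j <;> simp [RZ]

/-- `i ↦ (i % 2, i / 2)`: position inside the block, then block number. -/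
def blockIndexEquiv (k : ℕ) : Fin (k * 2) ≃ Fin 2 × Fin k :=
  finProdFinEquiv.symm.trans (Equiv.prodComm _ _)

theorem blockDiag2_eq_submatrix_blockDiagonal (k : ℕ) (M : ℕ → Matrix (Fin 2) (Fin 2) ℂ) :
    blockDiag2 k M = (blockDiagonal fun q : Fin k => M q).submatrix
      (blockIndexEquiv k) (blockIndexEquiv k) := by
  ext i j
  simp only [blockDiag2, of_apply, blockIndexEquiv, Equiv.coe_trans, Equiv.coe_prodComm,
    submatrix_apply, Function.comp_apply, finProdFinEquiv_symm_apply, Prod.swap_prod_mk,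
    blockDiagonal_apply, Fin.ext_iff, Fin.coe_divNat]
  rfl

theorem blockDiag2_mul (k : ℕ) (M N : ℕ → Matrix (Fin 2) (Fin 2) ℂ) :
    blockDiag2 k M * blockDiag2 k N = blockDiag2 k fun q => M q * N q := by
  simp only [blockDiag2_eq_submatrix_blockDiagonal, submatrix_mul_equiv, blockDiagonal_mul]

theorem blockDiag2_congr {k : ℕ} {M N : ℕ → Matrix (Fin 2) (Fin 2) ℂ}
    (h : ∀ q < k, M q = N q) : blockDiag2 k M = blockDiag2 k N := by
  simp only [blockDiag2_eq_submatrix_blockDiagonal]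
  congr 2
  ext q : 1
  exact h q q.2

theorem kronFirst_one_blockDiag2 (m : ℕ) (M : ℕ → Matrix (Fin 2) (Fin 2) ℂ) :
    kronFirst 1 (blockDiag2 m M) = blockDiag2 (m * 2) fun q => M (q % m) := by
  ext i j
  have hdiv (a : ℕ) : a / (m * 2) = a / 2 / m := by rw [mul_comm, Nat.div_div_eq_div_mul]
  have hmod_div (a : ℕ) : a % (m * 2) / 2 = a / 2 % m := by
    rw [mul_comm, Nat.mod_mul_right_div_self]
  have hmod_mod (a : ℕ) : a % (m * 2) % 2 = a % 2 := Nat.mod_mul_left_mod a m 2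
  simp only [kronFirst, blockDiag2, of_apply, one_apply, Fin.mk.injEq, hdiv, hmod_div, hmod_mod,
    Nat.ext_div_mod_iff m (i / 2) (j / 2)]
  split_ifs <;> simp_all

def cnotIndex (m : ℕ) (i : Fin (m * 2 * 2)) : Fin (m * 2 * 2) :=
  ⟨2 * ((i : ℕ) / 2) + if (i : ℕ) / 2 < m then (i : ℕ) % 2 else 1 - (i : ℕ) % 2, by
    split_ifs <;> omega⟩

theorem cnotIndex_val_div_two (m : ℕ) (i : Fin (m * 2 * 2)) :
    (cnotIndex m i : ℕ) / 2 = (i : ℕ) / 2 := by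
  simp only [cnotIndex]
  split_ifs <;> omega

theorem cnotIndex_val_mod_two (m : ℕ) (i : Fin (m * 2 * 2)) :
    (cnotIndex m i : ℕ) % 2 = if (i : ℕ) / 2 < m then (i : ℕ) % 2 else 1 - (i : ℕ) % 2 := by
  simp only [cnotIndex]
  split_ifs <;> omega

theorem cnotIndex_involutive (m : ℕ) : Function.Involutive (cnotIndex m) := fun i => by
  ext
  rw [← Nat.div_add_mod (cnotIndex m _) 2, cnotIndex_val_div_two, cnotIndex_val_mod_two,
    cnotIndex_val_div_two, cnotIndex_val_mod_two]
  split_ifs <;> omega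

theorem CNOTfl_eq_toMatrix (m : ℕ) :
    CNOTfl m = (cnotIndex_involutive m).toPerm.toPEquiv.toMatrix := by
  ext i j
  simp only [CNOTfl, of_apply, PEquiv.toMatrix_apply, Equiv.toPEquiv_apply, Option.mem_def,
    Option.some.injEq, Function.Involutive.coe_toPerm, cnotIndex, Fin.ext_iff, Nat.xor_one_eq]
  split_ifs <;> first | rfl | (exfalso; omega)

theorem CNOTfl_mul_blockDiag2_mul_CNOTfl (m : ℕ) (G : ℕ → Matrix (Fin 2) (Fin 2) ℂ) :
    CNOTfl m * blockDiag2 (m * 2) G * CNOTfl m =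
      blockDiag2 (m * 2) fun q => if q < m then G q else pauliX * G q * pauliX := by
  rw [CNOTfl_eq_toMatrix,
    PEquiv.toMatrix_toPEquiv_conj_of_involutive _ (cnotIndex_involutive m)]
  ext i j
  simp only [submatrix_apply, blockDiag2, of_apply, Function.Involutive.coe_toPerm,
    cnotIndex_val_div_two]
  split_ifs with hij hm
  · simp only [cnotIndex_val_mod_two, ← hij, hm, if_true]
  · rw [pauliX_mul_mul_pauliX, submatrix_apply]
    congr 1 <;> ext <;>
      simp only [cnotIndex_val_mod_two, Fin.val_rev, ← hij, hm, if_false] <;> omega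
  · rfl

theorem CNOTfl_mul_kronFirst_mul_CNOTfl_mul_kronFirst (m : ℕ)
    (R : ℝ → Matrix (Fin 2) (Fin 2) ℂ) (hmul : ∀ a b, R a * R b = R (a + b))
    (hconj : ∀ a, pauliX * R a * pauliX = R (-a)) (θ φ : ℕ → ℝ) :
    CNOTfl m * kronFirst 1 (blockDiag2 m fun j => R (φ j)) *
        CNOTfl m * kronFirst 1 (blockDiag2 m fun j => R (θ j)) =
      blockDiag2 (m * 2) fun j =>
        if j < m then R (θ j + φ j) else R (θ (j - m) - φ (j - m)) := by
  rw [kronFirst_one_blockDiag2, kronFirst_one_blockDiag2, CNOTfl_mul_blockDiag2_mul_CNOTfl,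
    blockDiag2_mul]
  refine blockDiag2_congr fun q _ => ?_
  split_ifs with h
  · rw [Nat.mod_eq_of_lt h, hmul, add_comm]
  · have hq' : q % m = q - m := by
      rw [Nat.mod_eq_sub_mod (not_lt.mp h), Nat.mod_eq_of_lt (by omega)]
    rw [hq', hconj, hmul, neg_add_eq_sub]

theorem cnot_conj_multirot_general (n : ℕ) (R : ℝ → Matrix (Fin 2) (Fin 2) ℂ)
    (hR : R = RY ∨ R = RZ) (θ φ : ℕ → ℝ) :
    CNOTfl (2 ^ (n - 2)) * kronFirst 1 (blockDiag2 (2 ^ (n - 2)) fun j => R (φ j)) *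
        CNOTfl (2 ^ (n - 2)) * kronFirst 1 (blockDiag2 (2 ^ (n - 2)) fun j => R (θ j)) =
      blockDiag2 (2 ^ (n - 2) * 2) fun j =>
        if j < 2 ^ (n - 2) then R (θ j + φ j)
        else R (θ (j - 2 ^ (n - 2)) - φ (j - 2 ^ (n - 2))) := by
  rcases hR with rfl | rfl
  · exact CNOTfl_mul_kronFirst_mul_CNOTfl_mul_kronFirst _ _ RY_mul_RY
      pauliX_mul_RY_mul_pauliX θ φ
  · exact CNOTfl_mul_kronFirst_mul_CNOTfl_mul_kronFirst _ _ RZ_mul_RZ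
      pauliX_mul_RZ_mul_pauliX θ φ

/-- Let `n ≥ 2`, `m = 2^(n-2)`, and let `R` be either `R_Y` or `R_Z`.  With
`F(θ) = blockdiag(R(θ_1), …, R(θ_m))` and `C` the CNOT gate with control on the first qubit
and target on the last qubit, for all `θ, φ`:
`C (I_2 ⊗ F(φ)) C (I_2 ⊗ F(θ)) = blockdiag(R(ψ_1), …, R(ψ_{2m}))`, where `ψ_j = θ_j + φ_j`
and `ψ_{m+j} = θ_j - φ_j` for `1 ≤ j ≤ m`. -/
theorem cnot_conj_multirot (n : ℕ) (hn : 2 ≤ n) (R : ℝ → Matrix (Fin 2) (Fin 2) ℂ)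
    (hR : R = RY ∨ R = RZ) (θ φ : ℕ → ℝ) :
    CNOTfl (2 ^ (n - 2)) * kronFirst 1 (blockDiag2 (2 ^ (n - 2)) fun j => R (φ j)) *
        CNOTfl (2 ^ (n - 2)) * kronFirst 1 (blockDiag2 (2 ^ (n - 2)) fun j => R (θ j)) =
      blockDiag2 (2 ^ (n - 2) * 2) fun j =>
        if j < 2 ^ (n - 2) then R (θ j + φ j)
        else R (θ (j - 2 ^ (n - 2)) - φ (j - 2 ^ (n - 2))) :=
  cnot_conj_multirot_general n R hR θ φ
end

section
/- Let n ≥ 2 and let Λ ⊆ {1,…,n−1} be nonempty. Define T^o_Λ as the set of pairs (a,b) where a is an even integer in {2,4,…,2^n}, b = ((a−2) XOR mask_Λ) + 1, and a < b. Then: (i) T^o_Λ has exactly 2^{n−2} elements, in each pair a is even and b is odd, and the pairs are pairwise disjoint (each integer in {1,…,2^n} occurs in at most one pair of T^o_Λ); (ii) every pair (a,b) with 1 ≤ a < b ≤ 2^n, a even and b odd belongs to T^o_Λ for exactly one nonempty Λ ⊆ {1,…,n−1}; consequently, the permutations of {1,…,2^n} obtained as the product of the disjoint transpositions in T^o_Λ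 are pairwise distinct for distinct nonempty Λ. -/
/-- `mask n Λ = Σ_{i ∈ Λ} 2^(n-i)`. -/
def mask (n : ℕ) (Λ : Finset ℕ) : ℕ := ∑ i ∈ Λ, 2 ^ (n - i)

/-- `To n Λ`: the pairs `(a, b)` with `a` even in `{2,4,…,2^n}`,
`b = ((a-2) XOR mask n Λ) + 1`, and `a < b`. -/
def To (n : ℕ) (Λ : Finset ℕ) : Finset (ℕ × ℕ) :=
  ((Finset.Icc 1 (2 ^ n)) ×ˢ (Finset.Icc 1 (2 ^ n))).filter
    fun p => p.1 % 2 = 0 ∧ p.2 = ((p.1 - 2) ^^^ mask n Λ) + 1 ∧ p.1 < p.2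

/-!
Reading `mask n Λ` backwards in binary, `Λ ↦ mask n Λ` is a bijection from the nonempty subsets
of `{1, …, n - 1}` onto the even numbers in `(0, 2 ^ n)`. For a fixed mask `m` the pairs of
`To n Λ` are `(x + 2, (x ^^^ m) + 1)` for the even `x < 2 ^ n` with `x < x ^^^ m`; since
`x ↦ x ^^^ m` is a fixed-point-free involution of the even numbers below `2 ^ n`, exactly half of
them qualify. A pair `(a, b)` recovers its mask as `(a - 2) ^^^ (b - 1)`, and the product of the
transpositions of `To n Λ` sends `2` to `mask n Λ + 1`, which tells the permutations apart.
-/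

open Finset

theorem Finset.two_mul_card_filter_lt_of_involutive {α : Type*} [LinearOrder α] {s : Finset α}
    {f : α → α} (hs : ∀ x ∈ s, f x ∈ s) (hf : Function.Involutive f) (hfix : ∀ x, f x ≠ x) :
    2 * #{x ∈ s | x < f x} = #s := by
  have hswap : #{x ∈ s | x < f x} = #{x ∈ s | ¬ x < f x} := by
    refine card_nbij' f f ?_ ?_ (fun x _ => hf x) (fun x _ => hf x)
    · intro x hx
      simp only [coe_filter, Set.mem_ofPred_eq, hf x] at hx ⊢
      exact ⟨hs x hx.1, hx.2.not_gt⟩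
    · intro x hx
      simp only [coe_filter, Set.mem_ofPred_eq, hf x] at hx ⊢
      exact ⟨hs x hx.1, (not_lt.1 hx.2).lt_of_ne (hfix x)⟩
  rw [two_mul]
  nth_rw 2 [hswap]
  exact card_filter_add_card_filter_not _

theorem Nat.card_filter_mod_two_eq_zero_range_two_mul (N : ℕ) :
    #{x ∈ range (2 * N) | x % 2 = 0} = N := by
  have : {x ∈ range (2 * N) | x % 2 = 0} = (range N).image (2 * ·) := by
    ext x
    simp only [mem_filter, mem_range, mem_image]
    exact ⟨fun h => ⟨x / 2, by omega, by omega⟩, by rintro ⟨y, hy, rfl⟩; omega⟩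
  rw [this, Finset.card_image_of_injective _ (mul_right_injective₀ two_ne_zero), Finset.card_range]

theorem Nat.card_filter_lt_xor {n m : ℕ} (hm0 : m ≠ 0) (hm : m % 2 = 0) (hmn : m < 2 ^ n) :
    #{x ∈ range (2 ^ n) | x % 2 = 0 ∧ x < x ^^^ m} = 2 ^ (n - 2) := by
  have hn : 2 ≤ n := by
    by_contra! h
    interval_cases n <;> omega
  have hevens : #{x ∈ range (2 ^ n) | x % 2 = 0} = 2 * 2 ^ (n - 2) := by
    rw [← Nat.card_filter_mod_two_eq_zero_range_two_mul (2 * 2 ^ (n - 2)), ← _root_.pow_succ',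
      ← _root_.pow_succ', show n - 2 + 1 + 1 = n by omega]
  have hpairs := two_mul_card_filter_lt_of_involutive (s := {x ∈ range (2 ^ n) | x % 2 = 0})
    (f := (· ^^^ m)) ?_ (fun x => xor_cancel_right x m) ?_
  · rw [filter_filter, hevens] at hpairs
    omega
  · intro x hx
    simp only [mem_filter, mem_range] at hx ⊢
    exact ⟨Nat.xor_lt_two_pow hx.1 hmn, by rw [Nat.xor_mod_two_eq]; omega⟩
  · intro x hx
    exact hm0 (Nat.xor_right_injective (hx.trans (Nat.xor_zero x).symm))

section Transpositions

variable {α : Type*} [DecidableEq α]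

theorem prod_map_swap_apply_of_forall_ne {l : List (α × α)} {x : α}
    (h : ∀ p ∈ l, x ≠ p.1 ∧ x ≠ p.2) : (l.map fun p => Equiv.swap p.1 p.2).prod x = x := by
  induction l with
  | nil => rfl
  | cons p l ih =>
    simp only [List.forall_mem_cons] at h
    rw [List.map_cons, List.prod_cons, Equiv.Perm.mul_apply, ih h.2,
      Equiv.swap_apply_of_ne_of_ne h.1.1 h.1.2]

theorem prod_map_swap_apply_of_mem {l : List (α × α)} (hl : l.Nodup) {a b : α}
    (hab : (a, b) ∈ l)
    (hdisj : ∀ q ∈ l, q ≠ (a, b) → a ≠ q.1 ∧ a ≠ q.2 ∧ b ≠ q.1 ∧ b ≠ q.2) :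
    (l.map fun p => Equiv.swap p.1 p.2).prod a = b := by
  obtain ⟨l₁, l₂, rfl⟩ := List.append_of_mem hab
  have hnot : (a, b) ∉ l₁ ++ l₂ := (List.nodup_cons.1 (List.nodup_middle.1 hl)).1
  have hdisj' : ∀ q ∈ l₁ ++ l₂, a ≠ q.1 ∧ a ≠ q.2 ∧ b ≠ q.1 ∧ b ≠ q.2 := fun q hq =>
    hdisj q (List.mem_append.2 ((List.mem_append.1 hq).imp_right (List.mem_cons_of_mem _)))
      (by rintro rfl; exact hnot hq)
  simp only [List.map_append, List.map_cons, List.prod_append, List.prod_cons,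
    Equiv.Perm.mul_apply]
  rw [prod_map_swap_apply_of_forall_ne fun q hq =>
      (hdisj' q (List.mem_append_right l₁ hq)).imp_right And.left,
    Equiv.swap_apply_left,
    prod_map_swap_apply_of_forall_ne fun q hq => (hdisj' q (List.mem_append_left l₂ hq)).2.2]

end Transpositions

theorem Finset.image_tsub_image_tsub {n : ℕ} {s : Finset ℕ} (hs : s ⊆ Iic n) :
    (s.image (n - ·)).image (n - ·) = s := by
  rw [image_image]
  conv_rhs => rw [← image_id (s := s)]
  exact image_congr fun i hi => Nat.sub_sub_self (mem_Iic.1 (hs hi))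

section Mask

variable {n : ℕ} {Λ : Finset ℕ}

theorem image_tsub_subset_Icc (hΛ : Λ ⊆ Icc 1 (n - 1)) :
    Λ.image (n - ·) ⊆ Icc 1 (n - 1) := by
  intro j hj
  obtain ⟨i, hi, rfl⟩ := mem_image.1 hj
  have := mem_Icc.1 (hΛ hi)
  exact mem_Icc.2 ⟨by omega, by omega⟩

theorem Icc_one_tsub_one_subset_Iic : Icc 1 (n - 1) ⊆ Iic n :=
  Icc_subset_Iic_self.trans (Iic_subset_Iic.2 (Nat.sub_le n 1))

theorem mask_eq_sum_image (hΛ : Λ ⊆ Icc 1 (n - 1)) :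
    mask n Λ = ∑ j ∈ Λ.image (n - ·), 2 ^ j := by
  rw [mask, sum_image]
  intro i hi j hj h
  have := mem_Icc.1 (hΛ hi)
  have := mem_Icc.1 (hΛ hj)
  simp only at h
  omega

theorem mask_injOn : Set.InjOn (mask n) {Λ | Λ ⊆ Icc 1 (n - 1)} := by
  intro Λ₁ h₁ Λ₂ h₂ h
  rw [mask_eq_sum_image h₁, mask_eq_sum_image h₂] at h
  rw [← image_tsub_image_tsub (h₁.trans Icc_one_tsub_one_subset_Iic),
    ← image_tsub_image_tsub (h₂.trans Icc_one_tsub_one_subset_Iic),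
    geomSum_injective le_rfl h]

theorem mask_mod_two (hΛ : Λ ⊆ Icc 1 (n - 1)) : mask n Λ % 2 = 0 := by
  refine Nat.mod_eq_zero_of_dvd (dvd_sum fun i hi => dvd_pow_self 2 ?_)
  have := mem_Icc.1 (hΛ hi)
  omega

theorem mask_lt_two_pow (hΛ : Λ ⊆ Icc 1 (n - 1)) : mask n Λ < 2 ^ n := by
  rw [mask_eq_sum_image hΛ]
  exact Nat.geomSum_lt le_rfl fun j hj => by
    have := mem_Icc.1 (image_tsub_subset_Icc hΛ hj)
    omega

theorem mask_pos (hne : Λ.Nonempty) : 0 < mask n Λ :=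
  sum_pos (fun _ _ => Nat.two_pow_pos _) hne

theorem exists_mask_eq {m : ℕ} (hm0 : m ≠ 0) (hm : m % 2 = 0) (hmn : m < 2 ^ n) :
    ∃ Λ ⊆ Icc 1 (n - 1), Λ.Nonempty ∧ mask n Λ = m := by
  set S := m.bitIndices.toFinset with hSdef
  have hS : S ⊆ Icc 1 (n - 1) := by
    intro j hj
    rw [hSdef, List.mem_toFinset] at hj
    have hj0 : j ≠ 0 := by
      rintro rfl
      rw [Nat.mem_bitIndices, Nat.testBit_zero] at hj
      simp [hm] at hj
    have hjn : 2 ^ j < 2 ^ n := (Nat.two_pow_le_of_mem_bitIndices hj).trans_lt hmn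
    have := (Nat.pow_lt_pow_iff_right (by norm_num)).1 hjn
    exact mem_Icc.2 ⟨by omega, by omega⟩
  have hsum : ∑ j ∈ S, 2 ^ j = m := Finset.sum_toFinset_bitIndices_two_pow m
  refine ⟨S.image (n - ·), image_tsub_subset_Icc hS, ?_, ?_⟩
  · refine Finset.image_nonempty.2 (nonempty_iff_ne_empty.2 fun hS0 => hm0 ?_)
    rw [← hsum, hS0, sum_empty]
  · rw [mask_eq_sum_image (image_tsub_subset_Icc hS),
      image_tsub_image_tsub (hS.trans Icc_one_tsub_one_subset_Iic), hsum]

theorem existsUnique_mask_eq {m : ℕ} (hm0 : m ≠ 0) (hm : m % 2 = 0) (hmn : m < 2 ^ n) :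
    ∃! Λ, Λ ⊆ Icc 1 (n - 1) ∧ Λ.Nonempty ∧ mask n Λ = m := by
  obtain ⟨Λ, hΛ, hne, hmask⟩ := exists_mask_eq hm0 hm hmn
  exact ⟨Λ, ⟨hΛ, hne, hmask⟩, fun Λ' ⟨hΛ', _, hmask'⟩ =>
    mask_injOn hΛ' hΛ (hmask'.trans hmask.symm)⟩

end Mask

section Pairs

variable {n : ℕ} {Λ : Finset ℕ}

theorem mem_To_iff_mask_eq {a b : ℕ} (ha : 2 ≤ a) (hab : a < b) (hb : b ≤ 2 ^ n)
    (hae : a % 2 = 0) : (a, b) ∈ To n Λ ↔ mask n Λ = (a - 2) ^^^ (b - 1) := by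
  simp only [To, mem_filter, mem_product, mem_Icc]
  constructor
  · rintro ⟨-, -, hb', -⟩
    rw [hb', Nat.add_sub_cancel, xor_cancel_left]
  · intro h
    refine ⟨⟨⟨by omega, by omega⟩, by omega, hb⟩, hae, ?_, hab⟩
    rw [h, xor_cancel_left]
    omega

theorem existsUnique_mem_To {a b : ℕ} (ha : 1 ≤ a) (hab : a < b) (hb : b ≤ 2 ^ n)
    (hae : a % 2 = 0) (hbo : b % 2 = 1) :
    ∃! Λ, Λ ⊆ Icc 1 (n - 1) ∧ Λ.Nonempty ∧ (a, b) ∈ To n Λ := by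
  have hm0 : (a - 2) ^^^ (b - 1) ≠ 0 := fun h => by
    have := xor_eq_zero_iff.1 h
    omega
  have hm : ((a - 2) ^^^ (b - 1)) % 2 = 0 := by rw [Nat.xor_mod_two_eq]; omega
  have hmn : (a - 2) ^^^ (b - 1) < 2 ^ n := Nat.xor_lt_two_pow (by omega) (by omega)
  simpa only [mem_To_iff_mask_eq (by omega : 2 ≤ a) hab hb hae]
    using existsUnique_mask_eq hm0 hm hmn

variable (hΛ : Λ ⊆ Icc 1 (n - 1))
include hΛ

theorem To_eq_image :
    To n Λ = {x ∈ range (2 ^ n) | x % 2 = 0 ∧ x < x ^^^ mask n Λ}.image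
      fun x => (x + 2, (x ^^^ mask n Λ) + 1) := by
  have hm := mask_mod_two hΛ
  have hmn := mask_lt_two_pow hΛ
  ext ⟨a, b⟩
  simp only [To, mem_filter, mem_product, mem_Icc, mem_image, mem_range, Prod.mk.injEq]
  constructor
  · rintro ⟨⟨⟨ha1, ha⟩, -, hb⟩, hae, rfl, hab⟩
    exact ⟨a - 2, ⟨by omega, by omega, by omega⟩, by omega, rfl⟩
  · rintro ⟨x, ⟨hx, hxe, hxm⟩, rfl, rfl⟩
    have hxm_lt := Nat.xor_lt_two_pow hx hmn
    have hxm_even : (x ^^^ mask n Λ) % 2 = 0 := by rw [Nat.xor_mod_two_eq]; omega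
    exact ⟨⟨⟨by omega, by omega⟩, by omega, by omega⟩, by omega, by simp, by omega⟩

theorem card_To (hne : Λ.Nonempty) : #(To n Λ) = 2 ^ (n - 2) := by
  rw [To_eq_image hΛ, card_image_of_injective _ fun x y h => by simpa using congrArg Prod.fst h]
  exact Nat.card_filter_lt_xor (mask_pos hne).ne' (mask_mod_two hΛ) (mask_lt_two_pow hΛ)

theorem mod_two_of_mem_To {p : ℕ × ℕ} (hp : p ∈ To n Λ) : p.1 % 2 = 0 ∧ p.2 % 2 = 1 := by
  rw [To_eq_image hΛ] at hp
  obtain ⟨x, hx, rfl⟩ := mem_image.1 hp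
  have := mask_mod_two hΛ
  have := Nat.xor_mod_two_eq (m := x) (n := mask n Λ)
  simp only [mem_filter] at hx
  exact ⟨by omega, by omega⟩

theorem ne_of_mem_To {p q : ℕ × ℕ} (hp : p ∈ To n Λ) (hq : q ∈ To n Λ) (hpq : p ≠ q) :
    p.1 ≠ q.1 ∧ p.1 ≠ q.2 ∧ p.2 ≠ q.1 ∧ p.2 ≠ q.2 := by
  have hpar_p := mod_two_of_mem_To hΛ hp
  have hpar_q := mod_two_of_mem_To hΛ hq
  rw [To_eq_image hΛ] at hp hq
  obtain ⟨x, -, rfl⟩ := mem_image.1 hp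
  obtain ⟨y, -, rfl⟩ := mem_image.1 hq
  have hxy : x ≠ y := by rintro rfl; exact hpq rfl
  have : x ^^^ mask n Λ ≠ y ^^^ mask n Λ := fun h => hxy (Nat.xor_left_injective h)
  simp only [ne_eq] at hpar_p hpar_q ⊢
  omega

theorem mk_two_mem_To (hne : Λ.Nonempty) : (2, mask n Λ + 1) ∈ To n Λ := by
  have := mask_pos (n := n) hne
  have := mask_mod_two hΛ
  have := mask_lt_two_pow hΛ
  rw [mem_To_iff_mask_eq le_rfl (by omega) (by omega) rfl, Nat.sub_self, Nat.add_sub_cancel,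
    Nat.zero_xor]

theorem prod_map_swap_apply_two (hne : Λ.Nonempty) {l : List (ℕ × ℕ)} (hl : l.Nodup)
    (hlΛ : l.toFinset = To n Λ) : (l.map fun p => Equiv.swap p.1 p.2).prod 2 = mask n Λ + 1 := by
  have hmem := mk_two_mem_To hΛ hne
  refine prod_map_swap_apply_of_mem hl (by rwa [← List.mem_toFinset, hlΛ]) fun q hq hq2 => ?_
  rw [← List.mem_toFinset, hlΛ] at hq
  exact ne_of_mem_To hΛ hmem hq (Ne.symm hq2)

end Pairs

theorem To_pairing_general (n : ℕ) :
    (∀ Λ : Finset ℕ, Λ ⊆ Finset.Icc 1 (n - 1) → Λ.Nonempty →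
      (To n Λ).card = 2 ^ (n - 2) ∧
      (∀ p ∈ To n Λ, p.1 % 2 = 0 ∧ p.2 % 2 = 1) ∧
      (∀ p ∈ To n Λ, ∀ q ∈ To n Λ, p ≠ q →
        p.1 ≠ q.1 ∧ p.1 ≠ q.2 ∧ p.2 ≠ q.1 ∧ p.2 ≠ q.2)) ∧
    (∀ a b : ℕ, 1 ≤ a → a < b → b ≤ 2 ^ n → a % 2 = 0 → b % 2 = 1 →
      ∃! Λ : Finset ℕ, Λ ⊆ Finset.Icc 1 (n - 1) ∧ Λ.Nonempty ∧ (a, b) ∈ To n Λ) ∧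
    (∀ Λ₁ Λ₂ : Finset ℕ, Λ₁ ⊆ Finset.Icc 1 (n - 1) → Λ₁.Nonempty →
      Λ₂ ⊆ Finset.Icc 1 (n - 1) → Λ₂.Nonempty → Λ₁ ≠ Λ₂ →
      ∀ l₁ l₂ : List (ℕ × ℕ), l₁.Nodup → l₁.toFinset = To n Λ₁ →
        l₂.Nodup → l₂.toFinset = To n Λ₂ →
        (l₁.map fun p => Equiv.swap p.1 p.2).prod ≠
          (l₂.map fun p => Equiv.swap p.1 p.2).prod) := by
  refine ⟨fun Λ hΛ hne => ⟨card_To hΛ hne, fun p => mod_two_of_mem_To hΛ,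
    fun p hp q hq => ne_of_mem_To hΛ hp hq⟩, fun a b => existsUnique_mem_To,
    fun Λ₁ Λ₂ h₁ hne₁ h₂ hne₂ hΛ l₁ l₂ hl₁ hlΛ₁ hl₂ hlΛ₂ hprod => hΛ (mask_injOn h₁ h₂ ?_)⟩
  have h₁ := prod_map_swap_apply_two h₁ hne₁ hl₁ hlΛ₁
  have h₂ := prod_map_swap_apply_two h₂ hne₂ hl₂ hlΛ₂
  rw [hprod, h₂] at h₁
  omega

/-- Let `n ≥ 2` and `Λ ⊆ {1,…,n-1}` be nonempty.  Then (i) `T^o_Λ` has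
exactly `2^(n-2)` elements, in each pair `a` is even and `b` is odd, and the pairs are
pairwise disjoint; (ii) every pair `(a,b)` with `1 ≤ a < b ≤ 2^n`, `a` even and `b` odd,
belongs to `T^o_Λ` for exactly one nonempty `Λ ⊆ {1,…,n-1}`; hence (iii) the permutations of
`{1,…,2^n}` obtained as products of the disjoint transpositions in `T^o_Λ` are pairwise
distinct for distinct nonempty `Λ`. -/
theorem To_pairing (n : ℕ) (hn : 2 ≤ n) :
    (∀ Λ : Finset ℕ, Λ ⊆ Finset.Icc 1 (n - 1) → Λ.Nonempty →
      (To n Λ).card = 2 ^ (n - 2) ∧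
      (∀ p ∈ To n Λ, p.1 % 2 = 0 ∧ p.2 % 2 = 1) ∧
      (∀ p ∈ To n Λ, ∀ q ∈ To n Λ, p ≠ q →
        p.1 ≠ q.1 ∧ p.1 ≠ q.2 ∧ p.2 ≠ q.1 ∧ p.2 ≠ q.2)) ∧
    (∀ a b : ℕ, 1 ≤ a → a < b → b ≤ 2 ^ n → a % 2 = 0 → b % 2 = 1 →
      ∃! Λ : Finset ℕ, Λ ⊆ Finset.Icc 1 (n - 1) ∧ Λ.Nonempty ∧ (a, b) ∈ To n Λ) ∧
    (∀ Λ₁ Λ₂ : Finset ℕ, Λ₁ ⊆ Finset.Icc 1 (n - 1) → Λ₁.Nonempty →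
      Λ₂ ⊆ Finset.Icc 1 (n - 1) → Λ₂.Nonempty → Λ₁ ≠ Λ₂ →
      ∀ l₁ l₂ : List (ℕ × ℕ), l₁.Nodup → l₁.toFinset = To n Λ₁ →
        l₂.Nodup → l₂.toFinset = To n Λ₂ →
        (l₁.map fun p => Equiv.swap p.1 p.2).prod ≠
          (l₂.map fun p => Equiv.swap p.1 p.2).prod) :=
  To_pairing_general n
end
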